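/- Let m ≥ 1 be an integer, ρ ∈ (0,1), let η ∈ C_c^∞(ℝ²) satisfy supp η ⊂ {|z'| < 1} and ∫_{ℝ²} η² dz' = 1, let ω' = (ω₁, ω₂) ∈ ℝ² be a unit vector, and let a = (a₁, a₂, a₃) ∈ ℂ³. Let λ, μ be real-valued C^m functions on { y ∈ ℝ³ : |y| ≤ δ, y₃ ≥ 0 } for some δ > 0, and set λ^m(y', y₃) := Σ_{n=0}^{m−1} (∂₃^n λ(y', 0)/n!) y₃^n and similarly μ^m. Define the complex numbers D := ( i(ω₁a₁ + ω₂a₂) − a₃ )² and B := Σ_{i,j=1}^{2} ( (a_i ω_j + a_j ω_i)/2 )² + 2 Σ_{i=1}^{2} ( (i a₃ ω_i − a_i)/2 )² + a₃² (squares of complex numbers, not moduli). Then lim_{N→∞} N^{m+3−2ρ} ∫₀^{1/(2√N)} ∫_{ℝ²} η(N^{1−ρ} y')² e^{−2N y₃} [ (λ − λ^m)(y) D + 2 (μ − μ^m)(y) B ] dy' dy₃ = (1/2^{m+1}) ∂₃^m λ(0) · D + (1/2^m) ∂₃^m μ(0) · B. -/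

import Mathlib

/-!
Along each normal segment `s ↦ (y', s)` the sum `fkBR B m f` is the Taylor polynomial of order
`m - 1` at `s = 0`, so by the Lagrange remainder `f - f^m = ∂₃^m f(y', ξ) y₃^m / m!`, which is
`∂₃^m f(0) y₃^m / m! + o(y₃^m)` uniformly near the origin. The weight `η(N^{1-ρ} y')²` has
integral `N^{-2(1-ρ)}` and support shrinking to `0`, while the substitution `s = 2Nt` and Euler's
integral for `Γ(m + 1)` give `N^{m+1} ∫₀^{1/(2√N)} t^m e^{-2Nt} dt → m!/2^{m+1}`. The constants `D`
and `Bq` enter linearly.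
-/

open MeasureTheory

noncomputable section

/-- Partial derivative in the `y₃` variable within a set `B`, for real valued `f`. -/
def d3BR (B : Set (Fin 3 → ℝ)) (f : (Fin 3 → ℝ) → ℝ) : (Fin 3 → ℝ) → ℝ :=
  fun y => fderivWithin ℝ f B y (Pi.single 2 1)

/-- The truncated normal Taylor expansion
`f^m(y', y₃) = Σ_{n<m} (∂₃ⁿ f(y',0)/n!) y₃ⁿ`. -/
def fkBR (B : Set (Fin 3 → ℝ)) (m : ℕ) (f : (Fin 3 → ℝ) → ℝ) (y : Fin 3 → ℝ) : ℝ :=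
  ∑ n ∈ Finset.range m,
    ((d3BR B)^[n] f ![y 0, y 1, 0] / (Nat.factorial n : ℝ)) * (y 2) ^ n

end

open Set Filter Topology Asymptotics
open scoped Nat

-- `‖·‖` on `Fin 3 → ℝ` is the sup norm, so this is a half-cube.
def halfBall (δ : ℝ) : Set (Fin 3 → ℝ) := {y | ‖y‖ ≤ δ ∧ 0 ≤ y 2}

lemma norm_vec3_le {z : Fin 2 → ℝ} {t r : ℝ} (hz : ‖z‖ ≤ r) (ht : |t| ≤ r) :
    ‖(![z 0, z 1, t] : Fin 3 → ℝ)‖ ≤ r := by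
  refine (pi_norm_le_iff_of_nonneg ((norm_nonneg z).trans hz)).2 fun i => ?_
  fin_cases i
  · exact (norm_le_pi_norm z 0).trans hz
  · exact (norm_le_pi_norm z 1).trans hz
  · simpa using ht

lemma vec3_mem_halfBall {δ : ℝ} {z : Fin 2 → ℝ} {t : ℝ} (hz : ‖z‖ ≤ δ) (ht : t ∈ Icc 0 δ) :
    ![z 0, z 1, t] ∈ halfBall δ :=
  show _ ∧ _ from ⟨norm_vec3_le hz ((abs_of_nonneg ht.1).trans_le ht.2), ht.1⟩

lemma convex_halfBall (δ : ℝ) : Convex ℝ (halfBall δ) := by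
  have : halfBall δ = Metric.closedBall 0 δ ∩ {y | 0 ≤ y 2} := by
    ext y; simp [halfBall]
  rw [this]
  exact (convex_closedBall 0 δ).inter
    (convex_halfSpace_ge (LinearMap.proj 2 : (Fin 3 → ℝ) →ₗ[ℝ] ℝ).isLinear 0)

lemma uniqueDiffOn_halfBall {δ : ℝ} (hδ : 0 < δ) : UniqueDiffOn ℝ (halfBall δ) := by
  refine uniqueDiffOn_convex (convex_halfBall δ) ⟨![0, 0, δ / 2], ?_⟩
  have hopen : IsOpen {y : Fin 3 → ℝ | ‖y‖ < δ ∧ 0 < y 2} :=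
    (isOpen_lt continuous_norm continuous_const).inter
      (isOpen_lt continuous_const (continuous_apply 2))
  refine interior_maximal (fun y (hy : _ ∧ _) => show _ ∧ _ from ⟨hy.1.le, hy.2.le⟩) hopen
    (show _ ∧ _ from ⟨?_, by simpa using hδ⟩)
  have : ‖(![0, 0, δ / 2] : Fin 3 → ℝ)‖ ≤ δ / 2 :=
    norm_vec3_le (z := 0) (by simp; positivity) (by rw [abs_of_pos (by positivity)])
  linarith

lemma hasDerivAt_vec3 (z : Fin 2 → ℝ) (s : ℝ) :
    HasDerivAt (fun s : ℝ => (![z 0, z 1, s] : Fin 3 → ℝ)) (Pi.single 2 1) s := by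
  refine hasDerivAt_pi.2 fun i => ?_
  fin_cases i <;> simp [hasDerivAt_const, hasDerivAt_id']

lemma contDiff_vec3 (z : Fin 2 → ℝ) {k : WithTop ℕ∞} :
    ContDiff ℝ k (fun s : ℝ => (![z 0, z 1, s] : Fin 3 → ℝ)) :=
  contDiff_pi.2 fun i => by fin_cases i <;> simp [contDiff_const, contDiff_fun_id]

section NormalDerivative

variable {B : Set (Fin 3 → ℝ)} {f : (Fin 3 → ℝ) → ℝ} {m : ℕ}

lemma contDiffOn_iterate_d3BR (hB : UniqueDiffOn ℝ B) (hf : ContDiffOn ℝ m f B) {n : ℕ}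
    (hn : n ≤ m) : ContDiffOn ℝ (m - n : ℕ) ((d3BR B)^[n] f) B := by
  induction n with
  | zero => simpa using hf
  | succ k ih =>
    rw [Function.iterate_succ_apply']
    have hk : ((m - (k + 1) : ℕ) : WithTop ℕ∞) + 1 ≤ (m - k : ℕ) := by
      norm_cast; omega
    exact ((ih (by omega)).fderivWithin hB hk).clm_apply contDiffOn_const

lemma hasDerivWithinAt_comp_vec3 {g : (Fin 3 → ℝ) → ℝ} {z : Fin 2 → ℝ} {S : Set ℝ} {s : ℝ}
    (hg : DifferentiableWithinAt ℝ g B ![z 0, z 1, s])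
    (hS : MapsTo (fun s => ![z 0, z 1, s]) S B) :
    HasDerivWithinAt (fun s => g ![z 0, z 1, s]) (d3BR B g ![z 0, z 1, s]) S s :=
  hg.hasFDerivWithinAt.comp_hasDerivWithinAt s (hasDerivAt_vec3 z s).hasDerivWithinAt hS

lemma iteratedDerivWithin_comp_vec3 (hB : UniqueDiffOn ℝ B) (hf : ContDiffOn ℝ m f B)
    {z : Fin 2 → ℝ} {T : ℝ} (hT : 0 < T) (hseg : MapsTo (fun s => ![z 0, z 1, s]) (Icc 0 T) B)
    {n : ℕ} (hn : n ≤ m) {s : ℝ} (hs : s ∈ Icc 0 T) :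
    iteratedDerivWithin n (fun s => f ![z 0, z 1, s]) (Icc 0 T) s
      = (d3BR B)^[n] f ![z 0, z 1, s] := by
  induction n generalizing s with
  | zero => simp
  | succ k ih =>
    have hdiff : DifferentiableOn ℝ ((d3BR B)^[k] f) B :=
      (contDiffOn_iterate_d3BR hB hf (by omega)).differentiableOn (by norm_cast; omega)
    rw [iteratedDerivWithin_succ,
      derivWithin_congr (fun y hy => ih (by omega) hy) (ih (by omega) hs),
      Function.iterate_succ_apply']
    exact (hasDerivWithinAt_comp_vec3 (hdiff _ (hseg hs)) hseg).derivWithin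
      (uniqueDiffOn_Icc hT s hs)

lemma exists_sub_fkBR_eq (hB : UniqueDiffOn ℝ B) (hf : ContDiffOn ℝ m f B)
    {z : Fin 2 → ℝ} {t : ℝ} (ht : 0 < t) (hseg : MapsTo (fun s => ![z 0, z 1, s]) (Icc 0 t) B) :
    ∃ ξ ∈ Ioc 0 t, f ![z 0, z 1, t] - fkBR B m f ![z 0, z 1, t]
      = (d3BR B)^[m] f ![z 0, z 1, ξ] * t ^ m / m ! := by
  cases m with
  | zero => exact ⟨t, right_mem_Ioc.2 ht, by simp [fkBR]⟩
  | succ n =>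
    have hF : ContDiffOn ℝ (n + 1) (fun s => f ![z 0, z 1, s]) (Icc 0 t) :=
      hf.comp (contDiff_vec3 z).contDiffOn hseg
    have hF' := hF.differentiableOn_iteratedDerivWithin (m := n) (by norm_cast; omega)
      (uniqueDiffOn_Icc ht)
    obtain ⟨ξ, hξ, heq⟩ := taylor_mean_remainder_lagrange (x₀ := 0) (n := n) ht.ne
      (by rw [uIcc_of_le ht.le]; exact hF.of_le (by norm_cast; omega))
      (by rw [uIcc_of_le ht.le, uIoo_of_le ht.le]; exact hF'.mono Ioo_subset_Icc_self)
    rw [uIoo_of_le ht.le] at hξ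
    rw [uIcc_of_le ht.le, sub_zero,
      iteratedDerivWithin_comp_vec3 hB hf ht hseg le_rfl (Ioo_subset_Icc_self hξ)] at heq
    refine ⟨ξ, Ioo_subset_Ioc_self hξ, ?_⟩
    rw [← heq, taylor_within_apply, fkBR]
    congr 1
    refine Finset.sum_congr rfl fun k hk => ?_
    rw [iteratedDerivWithin_comp_vec3 hB hf ht hseg (m := n + 1) (by simp at hk; omega)
      (left_mem_Icc.2 ht.le)]
    simp [div_eq_inv_mul]
    ring

end NormalDerivative

lemma exists_abs_sub_fkBR_sub_le {δ : ℝ} (hδ : 0 < δ) {m : ℕ} {f : (Fin 3 → ℝ) → ℝ}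
    (hf : ContDiffOn ℝ m f (halfBall δ)) {ε : ℝ} (hε : 0 < ε) :
    ∃ r ∈ Ioc 0 δ, ∀ z : Fin 2 → ℝ, ∀ t ∈ Ioc 0 r, ‖z‖ ≤ r →
      |f ![z 0, z 1, t] - fkBR (halfBall δ) m f ![z 0, z 1, t]
        - (d3BR (halfBall δ))^[m] f 0 * t ^ m / m !| ≤ ε * t ^ m := by
  set g := (d3BR (halfBall δ))^[m] f
  have hg : ContinuousOn g (halfBall δ) :=
    (contDiffOn_iterate_d3BR (uniqueDiffOn_halfBall hδ) hf le_rfl).continuousOn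
  have h0 : (0 : Fin 3 → ℝ) ∈ halfBall δ := ⟨by simpa using hδ.le, le_rfl⟩
  have hfac : (0 : ℝ) < m ! := by positivity
  obtain ⟨r₀, hr₀, hball⟩ := Metric.mem_nhdsWithin_iff.1 <|
    (hg 0 h0).preimage_mem_nhdsWithin
      (Metric.closedBall_mem_nhds (g 0) (by positivity : 0 < ε * m !))
  refine ⟨min (r₀ / 2) δ, ⟨by positivity, min_le_right _ _⟩, fun z t ht hz => ?_⟩
  have hseg : MapsTo (fun s => ![z 0, z 1, s]) (Icc 0 t) (halfBall δ) := fun s hs =>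
    vec3_mem_halfBall (hz.trans (min_le_right _ _))
      ⟨hs.1, hs.2.trans (ht.2.trans (min_le_right _ _))⟩
  obtain ⟨ξ, hξ, heq⟩ := exists_sub_fkBR_eq (uniqueDiffOn_halfBall hδ) hf ht.1 hseg
  have hξball : ![z 0, z 1, ξ] ∈ Metric.ball (0 : Fin 3 → ℝ) r₀ := by
    rw [mem_ball_zero_iff]
    refine (norm_vec3_le (hz.trans (min_le_left _ _)) ?_).trans_lt (by linarith)
    rw [abs_of_pos hξ.1]
    exact hξ.2.trans (ht.2.trans (min_le_left _ _))
  have hgξ : |g ![z 0, z 1, ξ] - g 0| ≤ ε * m ! :=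
    hball ⟨hξball, hseg (Ioc_subset_Icc_self hξ)⟩
  calc |f ![z 0, z 1, t] - fkBR (halfBall δ) m f ![z 0, z 1, t] - g 0 * t ^ m / m !|
      = |g ![z 0, z 1, ξ] - g 0| * t ^ m / m ! := by
        rw [heq, ← sub_div, ← sub_mul, abs_div, abs_mul, abs_of_pos (pow_pos ht.1 m),
          abs_of_pos hfac]
    _ ≤ ε * m ! * t ^ m / m ! := by gcongr; exact pow_nonneg ht.1.le m
    _ = ε * t ^ m := by field_simp

lemma continuousOn_sub_fkBR {δ : ℝ} (hδ : 0 < δ) {m : ℕ} {f : (Fin 3 → ℝ) → ℝ}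
    (hf : ContDiffOn ℝ m f (halfBall δ)) :
    ContinuousOn (fun y => f y - fkBR (halfBall δ) m f y) (halfBall δ) := by
  have hproj : MapsTo (fun y : Fin 3 → ℝ => ![y 0, y 1, 0]) (halfBall δ) (halfBall δ) :=
    fun y hy => vec3_mem_halfBall (z := ![y 0, y 1])
      ((pi_norm_le_iff_of_nonneg ((norm_nonneg y).trans hy.1)).2 fun i => by
        fin_cases i <;> simpa using (norm_le_pi_norm y _).trans hy.1)
      (left_mem_Icc.2 hδ.le)
  have hproj_cont : Continuous fun y : Fin 3 → ℝ => ![y 0, y 1, 0] :=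
    continuous_pi fun i => by fin_cases i <;> simp <;> fun_prop
  refine hf.continuousOn.sub (continuousOn_finsetSum _ fun n hn => ?_)
  have hn : n ≤ m := (Finset.mem_range.1 hn).le
  exact ((((contDiffOn_iterate_d3BR (uniqueDiffOn_halfBall hδ) hf hn).continuousOn.comp
    hproj_cont.continuousOn hproj).div_const _).mul (continuous_apply 2 |>.pow n).continuousOn)

lemma eta_eq_zero_of_inv_le_norm {η : (Fin 2 → ℝ) → ℝ}
    (hηsupp : tsupport η ⊆ Metric.ball 0 1) {c : ℝ} (hc : 0 < c) {z : Fin 2 → ℝ}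
    (hz : c⁻¹ ≤ ‖z‖) : η (fun i => c * z i) = 0 := by
  refine image_eq_zero_of_notMem_tsupport fun hmem => ?_
  have h := mem_ball_zero_iff.1 (hηsupp hmem)
  rw [show (fun i => c * z i) = c • z from rfl, norm_smul, Real.norm_of_nonneg hc.le] at h
  have := (inv_le_iff_one_le_mul₀ hc).1 hz
  linarith

lemma integrable_eta_sq_mul_weight_mul {δ : ℝ} {η : (Fin 2 → ℝ) → ℝ} (hη : Continuous η)
    (hηsupp : tsupport η ⊆ Metric.ball 0 1) {g : (Fin 3 → ℝ) → ℝ}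
    (hg : ContinuousOn g (halfBall δ)) {w : ℝ → ℝ} (hw : Continuous w) {c T : ℝ} (hc : 0 < c)
    (hcδ : c⁻¹ ≤ δ) (hTδ : T ≤ δ) :
    Integrable (fun p : ℝ × (Fin 2 → ℝ) =>
        η (fun i => c * p.2 i) ^ 2 * w p.1 * g ![p.2 0, p.2 1, p.1])
      ((volume.restrict (Ioc 0 T)).prod volume) := by
  rw [← Measure.restrict_univ (μ := (volume : Measure (Fin 2 → ℝ))), Measure.prod_restrict]
  have hK : IsCompact (Icc 0 T ×ˢ Metric.closedBall (0 : Fin 2 → ℝ) c⁻¹) :=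
    isCompact_Icc.prod (isCompact_closedBall _ _)
  have hmaps : MapsTo (fun p : ℝ × (Fin 2 → ℝ) => ![p.2 0, p.2 1, p.1])
      (Icc 0 T ×ˢ Metric.closedBall 0 c⁻¹) (halfBall δ) := fun p hp =>
    vec3_mem_halfBall ((mem_closedBall_zero_iff.1 hp.2).trans hcδ) ⟨hp.1.1, hp.1.2.trans hTδ⟩
  have hvec : Continuous fun p : ℝ × (Fin 2 → ℝ) => ![p.2 0, p.2 1, p.1] :=
    continuous_pi fun i => by fin_cases i <;> simp <;> fun_prop
  have hcont : ContinuousOn (fun p : ℝ × (Fin 2 → ℝ) =>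
      η (fun i => c * p.2 i) ^ 2 * w p.1 * g ![p.2 0, p.2 1, p.1])
      (Icc 0 T ×ˢ Metric.closedBall 0 c⁻¹) :=
    (by fun_prop : Continuous fun p : ℝ × (Fin 2 → ℝ) =>
      η (fun i => c * p.2 i) ^ 2 * w p.1).continuousOn.mul (hg.comp hvec.continuousOn hmaps)
  refine (hcont.integrableOn_compact hK).of_forall_sdiff_eq_zero
    (measurableSet_Ioc.prod MeasurableSet.univ) fun p hp => ?_
  have hp2 : p.2 ∉ Metric.closedBall 0 c⁻¹ := fun h => hp.2 ⟨Ioc_subset_Icc_self hp.1.1, h⟩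
  rw [mem_closedBall_zero_iff, not_le] at hp2
  simp [eta_eq_zero_of_inv_le_norm hηsupp hc hp2.le]

lemma tendsto_of_abs_sub_mul_le {α : Type*} {l : Filter α} {h E : α → ℝ} {κ L : ℝ}
    (hE : Tendsto E l (𝓝 L)) (happrox : ∀ ε > 0, ∀ᶠ x in l, |h x - κ * E x| ≤ ε * |E x|) :
    Tendsto h l (𝓝 (κ * L)) := by
  have hlittle : (fun x => h x - κ * E x) =o[l] E := IsLittleO.of_bound fun ε hε => by
    simpa only [Real.norm_eq_abs] using happrox ε hε
  have hzero := (isLittleO_one_iff ℝ).1 (hlittle.trans_isBigO (hE.isBigO_one ℝ))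
  simpa using hzero.add (hE.const_mul κ)

lemma eventually_scales_le {ρ : ℝ} (hρ1 : ρ < 1) {r : ℝ} (hr : 0 < r) :
    ∀ᶠ N : ℕ in atTop, (0 : ℝ) < N ∧ ((N : ℝ) ^ (1 - ρ))⁻¹ ≤ r ∧ 1 / (2 * √N) ≤ r := by
  have hc : Tendsto (fun N : ℕ => ((N : ℝ) ^ (1 - ρ))⁻¹) atTop (𝓝 0) :=
    ((tendsto_rpow_atTop (by linarith)).comp tendsto_natCast_atTop_atTop).inv_tendsto_atTop
  have hT : Tendsto (fun N : ℕ => 1 / (2 * √N)) atTop (𝓝 0) :=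
    tendsto_const_nhds.div_atTop <| (Real.tendsto_sqrt_atTop.comp
      tendsto_natCast_atTop_atTop).const_mul_atTop two_pos
  filter_upwards [eventually_gt_atTop 0, hc.eventually (ge_mem_nhds hr),
    hT.eventually (ge_mem_nhds hr)] with N hN hcN hTN
  exact ⟨Nat.cast_pos.2 hN, hcN, hTN⟩

lemma tendsto_intervalIntegral_exp_neg_mul_pow (m : ℕ) :
    Tendsto (fun x => ∫ s in (0)..x, Real.exp (-s) * s ^ m) atTop (𝓝 m !) := by
  have h := intervalIntegral_tendsto_integral_Ioi 0
    (Real.GammaIntegral_convergent (s := m + 1) (by positivity)) tendsto_id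
  rw [← Real.Gamma_eq_integral (by positivity), Real.Gamma_nat_eq_factorial] at h
  simpa only [id, add_sub_cancel_right, Real.rpow_natCast] using h

lemma integral_Ioc_pow_mul_exp_neg_mul {c b : ℝ} (hc : 0 < c) (hb : 0 ≤ b) (m : ℕ) :
    ∫ t in Ioc 0 b, t ^ m * Real.exp (-c * t)
      = (c ^ (m + 1))⁻¹ * ∫ s in (0)..(c * b), Real.exp (-s) * s ^ m := by
  rw [← intervalIntegral.integral_of_le hb]
  have hscale : ∀ t : ℝ,
      t ^ m * Real.exp (-c * t) = (c ^ m)⁻¹ * (Real.exp (-(c * t)) * (c * t) ^ m) :=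
    fun t => by field_simp; ring_nf
  simp_rw [hscale, intervalIntegral.integral_const_mul,
    intervalIntegral.integral_comp_mul_left (fun s => Real.exp (-s) * s ^ m) hc.ne', mul_zero,
    smul_eq_mul, pow_succ, mul_inv]
  ring

lemma tendsto_pow_mul_integral_pow_mul_exp (m : ℕ) :
    Tendsto (fun N : ℕ => (N : ℝ) ^ (m + 1) *
        ∫ t in Ioc 0 (1 / (2 * √N)), t ^ m * Real.exp (-2 * N * t))
      atTop (𝓝 (m ! / 2 ^ (m + 1))) := by
  have hlim := ((tendsto_intervalIntegral_exp_neg_mul_pow m).comp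
    (Real.tendsto_sqrt_atTop.comp tendsto_natCast_atTop_atTop)).const_mul (2 ^ (m + 1))⁻¹
  rw [inv_mul_eq_div] at hlim
  refine hlim.congr' ?_
  filter_upwards [eventually_gt_atTop 0] with N hN
  have hN : (0 : ℝ) < N := Nat.cast_pos.2 hN
  have hcb : 2 * (N : ℝ) * (1 / (2 * √N)) = √N := by
    field_simp
    rw [Real.sq_sqrt hN.le]
  simp only [Function.comp_apply, neg_mul (2 : ℝ) (N : ℝ)]
  rw [integral_Ioc_pow_mul_exp_neg_mul (by positivity) (by positivity), hcb, mul_pow]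
  field_simp

lemma integral_sq_comp_const_mul (η : (Fin 2 → ℝ) → ℝ) {c : ℝ} (hc : 0 ≤ c) :
    ∫ z : Fin 2 → ℝ, η (fun i => c * z i) ^ 2 = (c ^ 2)⁻¹ * ∫ z : Fin 2 → ℝ, η z ^ 2 := by
  have h := Measure.integral_comp_smul_of_nonneg volume (fun z => η z ^ 2) c (hR := hc)
  rwa [Module.finrank_fin_fun, smul_eq_mul] at h

lemma abs_integral_sub_mul_le {α : Type*} [MeasurableSpace α] {μ : Measure α} {G H : α → ℝ}
    (hG : Integrable G μ) (hH : Integrable H μ) {κ ε : ℝ}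
    (h : ∀ᵐ x ∂μ, |G x - κ * H x| ≤ ε * H x) :
    |∫ x, G x ∂μ - κ * ∫ x, H x ∂μ| ≤ ε * ∫ x, H x ∂μ := by
  rw [← integral_const_mul, ← integral_sub hG (hH.const_mul κ), ← integral_const_mul]
  exact abs_integral_le_integral_abs.trans
    (integral_mono_ae (hG.sub (hH.const_mul κ)).abs (hH.const_mul ε) h)

lemma rpow_mul_inv_rpow_sq {N ρ : ℝ} (hN : 0 < N) (m : ℕ) :
    N ^ ((m : ℝ) + 3 - 2 * ρ) * ((N ^ (1 - ρ)) ^ 2)⁻¹ = N ^ (m + 1) := by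
  rw [← Real.rpow_natCast (N ^ (1 - ρ)), ← Real.rpow_mul hN.le, ← Real.rpow_neg hN.le,
    ← Real.rpow_add hN, ← Real.rpow_natCast]
  congr 1
  push_cast
  ring

lemma abs_integral_eta_sq_mul_sub_fkBR_sub_le {δ r ε c T : ℝ} (hδ : 0 < δ) (hr : r ≤ δ)
    {η : (Fin 2 → ℝ) → ℝ} (hη : Continuous η) (hηsupp : tsupport η ⊆ Metric.ball 0 1)
    {m : ℕ} {f : (Fin 3 → ℝ) → ℝ} (hf : ContDiffOn ℝ m f (halfBall δ))
    (hbound : ∀ z : Fin 2 → ℝ, ∀ t ∈ Ioc 0 r, ‖z‖ ≤ r →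
      |f ![z 0, z 1, t] - fkBR (halfBall δ) m f ![z 0, z 1, t]
        - (d3BR (halfBall δ))^[m] f 0 * t ^ m / m !| ≤ ε * t ^ m)
    {w : ℝ → ℝ} (hw : Continuous w) (hw0 : ∀ t, 0 ≤ w t) (hc : 0 < c) (hcr : c⁻¹ ≤ r)
    (hTr : T ≤ r) :
    |(∫ t in Ioc 0 T, ∫ z : Fin 2 → ℝ, η (fun i => c * z i) ^ 2 * w t *
        (f ![z 0, z 1, t] - fkBR (halfBall δ) m f ![z 0, z 1, t]))
      - (d3BR (halfBall δ))^[m] f 0 / m ! *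
        ((∫ t in Ioc 0 T, t ^ m * w t) * ∫ z : Fin 2 → ℝ, η (fun i => c * z i) ^ 2)|
    ≤ ε * ((∫ t in Ioc 0 T, t ^ m * w t) * ∫ z : Fin 2 → ℝ, η (fun i => c * z i) ^ 2) := by
  set μ := (volume.restrict (Ioc (0 : ℝ) T)).prod (volume : Measure (Fin 2 → ℝ))
  set G : ℝ × (Fin 2 → ℝ) → ℝ := fun p => η (fun i => c * p.2 i) ^ 2 * w p.1 *
    (f ![p.2 0, p.2 1, p.1] - fkBR (halfBall δ) m f ![p.2 0, p.2 1, p.1])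
  set H : ℝ × (Fin 2 → ℝ) → ℝ := fun p => p.1 ^ m * w p.1 * η (fun i => c * p.2 i) ^ 2
  have hG : Integrable G μ :=
    integrable_eta_sq_mul_weight_mul hη hηsupp (continuousOn_sub_fkBR hδ hf) hw hc
      (hcr.trans hr) (hTr.trans hr)
  have hH : Integrable H μ :=
    (integrable_eta_sq_mul_weight_mul hη hηsupp (g := fun y => y 2 ^ m) (by fun_prop) hw hc
      (hcr.trans hr) (hTr.trans hr)).congr (Eventually.of_forall fun p => by simp [H]; ring)
  have hGH : ∀ᵐ p ∂μ, |G p - (d3BR (halfBall δ))^[m] f 0 / m ! * H p| ≤ ε * H p := by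
    filter_upwards [Measure.quasiMeasurePreserving_fst.ae (ae_restrict_mem measurableSet_Ioc)]
      with p hp
    rcases le_or_gt c⁻¹ ‖p.2‖ with hz | hz
    · simp [G, H, eta_eq_zero_of_inv_le_norm hηsupp hc hz]
    have hw' : 0 ≤ η (fun i => c * p.2 i) ^ 2 * w p.1 := mul_nonneg (sq_nonneg _) (hw0 _)
    have hsplit : G p - (d3BR (halfBall δ))^[m] f 0 / m ! * H p
        = η (fun i => c * p.2 i) ^ 2 * w p.1 *
          (f ![p.2 0, p.2 1, p.1] - fkBR (halfBall δ) m f ![p.2 0, p.2 1, p.1]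
            - (d3BR (halfBall δ))^[m] f 0 * p.1 ^ m / m !) := by
      simp only [G, H]; ring
    rw [hsplit, abs_mul, abs_of_nonneg hw']
    calc _ ≤ η (fun i => c * p.2 i) ^ 2 * w p.1 * (ε * p.1 ^ m) :=
          mul_le_mul_of_nonneg_left (hbound p.2 p.1 ⟨hp.1, hp.2.trans hTr⟩ (hz.le.trans hcr)) hw'
      _ = ε * H p := by simp only [H]; ring
  have h := abs_integral_sub_mul_le hG hH hGH
  rwa [integral_prod G hG, integral_prod_mul (fun t => t ^ m * w t)
    (fun z : Fin 2 → ℝ => η (fun i => c * z i) ^ 2)] at h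

lemma tendsto_scaled_integral_sub_fkBR {δ ρ : ℝ} (hδ : 0 < δ) (hρ1 : ρ < 1)
    {η : (Fin 2 → ℝ) → ℝ} (hη : Continuous η) (hηsupp : tsupport η ⊆ Metric.ball 0 1)
    (hηint : ∫ z : Fin 2 → ℝ, η z ^ 2 = 1) {m : ℕ} {f : (Fin 3 → ℝ) → ℝ}
    (hf : ContDiffOn ℝ m f (halfBall δ)) :
    Tendsto (fun N : ℕ => (N : ℝ) ^ ((m : ℝ) + 3 - 2 * ρ) *
        ∫ t in Ioc 0 (1 / (2 * √N)), ∫ z : Fin 2 → ℝ,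
          η (fun i => (N : ℝ) ^ (1 - ρ) * z i) ^ 2 * Real.exp (-2 * N * t) *
            (f ![z 0, z 1, t] - fkBR (halfBall δ) m f ![z 0, z 1, t]))
      atTop (𝓝 ((d3BR (halfBall δ))^[m] f 0 / 2 ^ (m + 1))) := by
  have hlim : (d3BR (halfBall δ))^[m] f 0 / m ! * (m ! / 2 ^ (m + 1))
      = (d3BR (halfBall δ))^[m] f 0 / 2 ^ (m + 1) := by
    field_simp
  rw [← hlim]
  refine tendsto_of_abs_sub_mul_le (tendsto_pow_mul_integral_pow_mul_exp m) fun ε hε => ?_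
  obtain ⟨r, hr, hbound⟩ := exists_abs_sub_fkBR_sub_le hδ hf hε
  filter_upwards [eventually_scales_le hρ1 hr.1] with N ⟨hN, hcr, hTr⟩
  have hc : 0 < (N : ℝ) ^ (1 - ρ) := Real.rpow_pos_of_pos hN _
  have key := abs_integral_eta_sq_mul_sub_fkBR_sub_le hδ hr.2 hη hηsupp hf hbound
    (w := fun t => Real.exp (-2 * N * t)) (by fun_prop) (fun t => (Real.exp_pos _).le) hc hcr hTr
  rw [integral_sq_comp_const_mul η hc.le, hηint, mul_one] at key
  set P := (N : ℝ) ^ ((m : ℝ) + 3 - 2 * ρ)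
  set I := ∫ t in Ioc 0 (1 / (2 * √(N : ℝ))), ∫ z : Fin 2 → ℝ,
    η (fun i => (N : ℝ) ^ (1 - ρ) * z i) ^ 2 * Real.exp (-2 * N * t) *
      (f ![z 0, z 1, t] - fkBR (halfBall δ) m f ![z 0, z 1, t])
  set J := ∫ t in Ioc 0 (1 / (2 * √(N : ℝ))), t ^ m * Real.exp (-2 * N * t)
  set c2 := (((N : ℝ) ^ (1 - ρ)) ^ 2)⁻¹
  have hP : 0 ≤ P := by positivity
  have hJ : 0 ≤ J := setIntegral_nonneg measurableSet_Ioc fun t ht => by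
    have := ht.1.le; positivity
  set κ := (d3BR (halfBall δ))^[m] f 0 / (m ! : ℝ)
  have hPc : P * c2 = (N : ℝ) ^ (m + 1) := rpow_mul_inv_rpow_sq hN m
  rw [← hPc, abs_of_nonneg (mul_nonneg (mul_nonneg hP (by positivity)) hJ),
    show P * I - κ * (P * c2 * J) = P * (I - κ * (J * c2)) by ring, abs_mul, abs_of_nonneg hP]
  calc P * |I - κ * (J * c2)| ≤ P * (ε * (J * c2)) := by gcongr
    _ = ε * (P * c2 * J) := by ring

lemma integral_integral_ofReal_mul_add {α β : Type*} [MeasurableSpace α] [MeasurableSpace β]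
    {μ : Measure α} {ν : Measure β} [SFinite μ] [SFinite ν] {g h : α × β → ℝ}
    (hg : Integrable g (μ.prod ν)) (hh : Integrable h (μ.prod ν)) (D E : ℂ) :
    ∫ x, ∫ y, ((g (x, y) : ℂ) * D + (h (x, y) : ℂ) * E) ∂ν ∂μ
      = ((∫ x, ∫ y, g (x, y) ∂ν ∂μ : ℝ) : ℂ) * D + ((∫ x, ∫ y, h (x, y) ∂ν ∂μ : ℝ) : ℂ) * E := by
  have hg' : Integrable (fun p => (g p : ℂ) * D) (μ.prod ν) := hg.ofReal.mul_const D
  have hh' : Integrable (fun p => (h p : ℂ) * E) (μ.prod ν) := hh.ofReal.mul_const E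
  rw [← integral_prod (fun p => (g p : ℂ) * D + (h p : ℂ) * E) (hg'.add hh'),
    ← integral_prod g hg, ← integral_prod h hh, integral_add hg' hh', integral_mul_const,
    integral_mul_const, integral_complex_ofReal, integral_complex_ofReal]

theorem stmt18_general (m : ℕ) (ρ : ℝ) (hρ1 : ρ < 1)
    (η : (Fin 2 → ℝ) → ℝ) (hη : ContDiff ℝ (⊤ : ℕ∞) η)
    (hηsupp : tsupport η ⊆ Metric.ball (0 : Fin 2 → ℝ) 1)
    (hηint : ∫ z : Fin 2 → ℝ, (η z) ^ 2 = 1)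
    (δ : ℝ) (hδ : 0 < δ) (B : Set (Fin 3 → ℝ))
    (hB : B = {y : Fin 3 → ℝ | ‖y‖ ≤ δ ∧ 0 ≤ y 2})
    (lam mu : (Fin 3 → ℝ) → ℝ)
    (hlam : ContDiffOn ℝ m lam B) (hmu : ContDiffOn ℝ m mu B)
    (D Bq : ℂ) :
    Filter.Tendsto
      (fun N : ℕ =>
        ((N : ℝ) ^ ((m : ℝ) + 3 - 2 * ρ)) •
          ∫ t in Set.Ioc (0 : ℝ) (1 / (2 * Real.sqrt N)),
            ∫ z : Fin 2 → ℝ,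
              (((η (fun i => (N : ℝ) ^ (1 - ρ) * z i)) ^ 2 * Real.exp (-2 * N * t) : ℝ) : ℂ) *
                (((lam ![z 0, z 1, t] - fkBR B m lam ![z 0, z 1, t] : ℝ) : ℂ) * D
                  + 2 * ((mu ![z 0, z 1, t] - fkBR B m mu ![z 0, z 1, t] : ℝ) : ℂ) * Bq))
      Filter.atTop
      (nhds (((1 / 2 ^ (m + 1) : ℝ) : ℂ) * (((d3BR B)^[m] lam 0 : ℝ) : ℂ) * D
        + ((1 / 2 ^ m : ℝ) : ℂ) * (((d3BR B)^[m] mu 0 : ℝ) : ℂ) * Bq)) := by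
  obtain rfl : B = halfBall δ := hB
  have hlim_lam := tendsto_scaled_integral_sub_fkBR hδ hρ1 hη.continuous hηsupp hηint hlam
  have hlim_mu := tendsto_scaled_integral_sub_fkBR hδ hρ1 hη.continuous hηsupp hηint hmu
  have hlim := (((Complex.continuous_ofReal.tendsto _).comp hlim_lam).mul_const D).add
    ((((Complex.continuous_ofReal.tendsto _).comp hlim_mu).const_mul 2).mul_const Bq)
  convert hlim.congr' ?_ using 2
  · push_cast
    ring
  filter_upwards [eventually_scales_le hρ1 hδ] with N ⟨hN, hcδ, hTδ⟩
  have hc : 0 < (N : ℝ) ^ (1 - ρ) := Real.rpow_pos_of_pos hN _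
  have hG := fun {f} (hf : ContDiffOn ℝ m f (halfBall δ)) =>
    integrable_eta_sq_mul_weight_mul hη.continuous hηsupp (continuousOn_sub_fkBR hδ hf)
      (w := fun t => Real.exp (-2 * N * t)) (by fun_prop) hc hcδ hTδ
  simp_rw [Complex.real_smul, show ∀ w a b : ℝ, (w : ℂ) * ((a : ℂ) * D + 2 * (b : ℂ) * Bq)
    = ((w * a : ℝ) : ℂ) * D + ((w * b : ℝ) : ℂ) * (2 * Bq) from fun w a b => by push_cast; ring]
  rw [integral_integral_ofReal_mul_add (hG hlam) (hG hmu)]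
  simp only [Function.comp_apply]
  push_cast
  ring

/-- The boundary determination limit for the Lamé moduli: with
`D = (i(ω₁a₁+ω₂a₂) − a₃)²` and
`B = Σ_{i,j=1}² ((a_iω_j+a_jω_i)/2)² + 2Σ_{i=1}² ((ia₃ω_i−a_i)/2)² + a₃²`,
`N^{m+3−2ρ} ∫₀^{1/(2√N)} ∫_{ℝ²} η² e^{−2Ny₃} [(λ−λ^m)D + 2(μ−μ^m)B] dy'dy₃`
converges, as `N → ∞`, to `(1/2^{m+1}) ∂₃^m λ(0) D + (1/2^m) ∂₃^m μ(0) B`. -/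
theorem stmt18 (m : ℕ) (hm : 1 ≤ m) (ρ : ℝ) (hρ : 0 < ρ) (hρ1 : ρ < 1)
    (η : (Fin 2 → ℝ) → ℝ) (hη : ContDiff ℝ (⊤ : ℕ∞) η) (hηc : HasCompactSupport η)
    (hηsupp : tsupport η ⊆ Metric.ball (0 : Fin 2 → ℝ) 1)
    (hηint : ∫ z : Fin 2 → ℝ, (η z) ^ 2 = 1)
    (ω1 ω2 : ℝ) (hω : ω1 ^ 2 + ω2 ^ 2 = 1) (a : Fin 3 → ℂ)
    (δ : ℝ) (hδ : 0 < δ) (B : Set (Fin 3 → ℝ))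
    (hB : B = {y : Fin 3 → ℝ | ‖y‖ ≤ δ ∧ 0 ≤ y 2})
    (lam mu : (Fin 3 → ℝ) → ℝ)
    (hlam : ContDiffOn ℝ m lam B) (hmu : ContDiffOn ℝ m mu B)
    (D Bq : ℂ)
    (hD : D = (Complex.I * ((ω1 : ℂ) * a 0 + (ω2 : ℂ) * a 1) - a 2) ^ 2)
    (hBq : Bq =
      (∑ i : Fin 2, ∑ j : Fin 2,
          ((a i.castSucc * (![(ω1 : ℂ), (ω2 : ℂ)] : Fin 2 → ℂ) j
              + a j.castSucc * (![(ω1 : ℂ), (ω2 : ℂ)] : Fin 2 → ℂ) i) / 2) ^ 2)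
        + 2 * (∑ i : Fin 2,
            ((Complex.I * a 2 * (![(ω1 : ℂ), (ω2 : ℂ)] : Fin 2 → ℂ) i
              - a i.castSucc) / 2) ^ 2)
        + (a 2) ^ 2) :
    Filter.Tendsto
      (fun N : ℕ =>
        ((N : ℝ) ^ ((m : ℝ) + 3 - 2 * ρ)) •
          ∫ t in Set.Ioc (0 : ℝ) (1 / (2 * Real.sqrt N)),
            ∫ z : Fin 2 → ℝ,
              (((η (fun i => (N : ℝ) ^ (1 - ρ) * z i)) ^ 2 * Real.exp (-2 * N * t) : ℝ) : ℂ) *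
                (((lam ![z 0, z 1, t] - fkBR B m lam ![z 0, z 1, t] : ℝ) : ℂ) * D
                  + 2 * ((mu ![z 0, z 1, t] - fkBR B m mu ![z 0, z 1, t] : ℝ) : ℂ) * Bq))
      Filter.atTop
      (nhds (((1 / 2 ^ (m + 1) : ℝ) : ℂ) * (((d3BR B)^[m] lam 0 : ℝ) : ℂ) * D
        + ((1 / 2 ^ m : ℝ) : ℂ) * (((d3BR B)^[m] mu 0 : ℝ) : ℂ) * Bq)) :=
  stmt18_general m ρ hρ1 η hη hηsupp hηint δ hδ B hB lam mu hlam hmu D Bq
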